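/- arXiv:2001.06155 — 3 statements merged into one kernel-verified Lean document; each statement's English description precedes it below -/
import Mathlib

section
/- Let $\Omega \subseteq \mathbb{R}^n$ be a convex open domain and $\Psi: \Omega \to \mathbb{R}$ a $C^2$ strongly convex function. If the Riemannian metric $g_{ij} = \partial_i \partial_j \Psi$ on $\Omega$ is complete, then the Kähler metric $\mathfrak{h}_{i\bar j} = \Psi_{ij}(x)$ on the tube domain $T\Omega = \Omega \times \mathbb{R}^n \subseteq \mathbb{C}^n$ (which is independent of the imaginary coordinates $y$) is complete. -/
open Set MeasureTheory

/-- The quadratic form of the Hessian metric `g_{ij} = ∂_i∂_j Ψ` at `x`,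
applied to the velocity vector `u`. -/
noncomputable def hessForm {n : ℕ} (Ψ : (Fin n → ℝ) → ℝ) (x u : Fin n → ℝ) : ℝ :=
  ∑ i, ∑ j, u i * u j *
    fderiv ℝ (fun z => fderiv ℝ Ψ z (Pi.single i 1)) x (Pi.single j 1)

/-- A curve eventually leaves every compact subset of `Ω`. -/
def EscapesCompacts {α : Type*} [TopologicalSpace α] (Ω : Set α) (γ : ℝ → α) : Prop :=
  ∀ K : Set α, IsCompact K → K ⊆ Ω → ∃ T : ℝ, ∀ s, T ≤ s → γ s ∉ K

/-- Completeness of the Hessian metric `g = D²Ψ` on `Ω`: every `C¹` curve in `Ω`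
leaving every compact set has infinite length. -/
def HessianComplete {n : ℕ} (Ω : Set (Fin n → ℝ)) (Ψ : (Fin n → ℝ) → ℝ) : Prop :=
  ∀ γ : ℝ → (Fin n → ℝ), ContDiff ℝ 1 γ → (∀ s, 0 ≤ s → γ s ∈ Ω) →
    EscapesCompacts Ω γ →
    ∫⁻ s in Ioi (0:ℝ),
      ENNReal.ofReal (Real.sqrt (hessForm Ψ (γ s) (deriv γ s))) = ⊤

/-- Completeness of the Kähler Sasaki metric `𝔥_{i j̄} = Ψ_{ij}(x)` on the tube
domain `TΩ = Ω × ℝⁿ ⊆ ℂⁿ`: for a curve `γ(s) = (x(s), y(s))`,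
`|γ̇|²_𝔥 = Σ (ẋᵢẋⱼ + ẏᵢẏⱼ) Ψ_{ij}(x)`, and every `C¹` curve leaving every
compact subset of `TΩ` has infinite length. -/
def TubeComplete {n : ℕ} (Ω : Set (Fin n → ℝ)) (Ψ : (Fin n → ℝ) → ℝ) : Prop :=
  ∀ x y : ℝ → (Fin n → ℝ), ContDiff ℝ 1 x → ContDiff ℝ 1 y →
    (∀ s, 0 ≤ s → x s ∈ Ω) →
    EscapesCompacts (Ω ×ˢ (univ : Set (Fin n → ℝ))) (fun s => (x s, y s)) →
    ∫⁻ s in Ioi (0:ℝ),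
      ENNReal.ofReal (Real.sqrt
        (hessForm Ψ (x s) (deriv x s) + hessForm Ψ (x s) (deriv y s))) = ⊤

/-!
If the tube length of `s ↦ (x s, y s)` were finite, so would be the length of the base curve `x`,
so by completeness of the base `x` returns to some compact `K ⊆ Ω` at arbitrarily late times.
On a compact `ε`-neighbourhood of `K` inside `Ω` the Hessian dominates `c ‖·‖²`, so over it the
tube metric dominates `√c` times the flat metric. Pick a return time `s₀` after which the
remaining tube length is below `√c ε`. The tube curve escapes the compact flat ball of radius `ε`
around its position at `s₀`, and until its first exit it lies over the neighbourhood of `K`, so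
that stretch alone has tube length at least `√c ε`.
-/

open Filter Topology Metric

lemma ofReal_norm_sub_le_lintegral_norm_deriv {E : Type*} [NormedAddCommGroup E]
    [NormedSpace ℝ E] {γ : ℝ → E} (hγ : ContDiff ℝ 1 γ) {a b : ℝ} (hab : a ≤ b) :
    ENNReal.ofReal ‖γ b - γ a‖ ≤ ∫⁻ s in Ioo a b, ENNReal.ofReal ‖deriv γ s‖ := by
  have hγ' : Continuous (deriv γ) := hγ.continuous_deriv le_rfl
  calc ENNReal.ofReal ‖γ b - γ a‖ ≤ ENNReal.ofReal (∫ s in a..b, ‖deriv γ s‖) :=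
        ENNReal.ofReal_le_ofReal <| norm_sub_le_integral_of_norm_deriv_le_of_le hab
          hγ.continuous.continuousOn (hγ.differentiable one_ne_zero).differentiableOn
          (ae_of_all _ fun _ _ => le_rfl) (hγ'.norm.intervalIntegrable a b)
    _ = ∫⁻ s in Ioo a b, ENNReal.ofReal ‖deriv γ s‖ := by
      rw [intervalIntegral.integral_of_le hab, integral_Ioc_eq_integral_Ioo]
      exact ofReal_integral_eq_lintegral_ofReal
        (hγ'.norm.integrableOn_Icc.mono_set Ioo_subset_Icc_self)
        (ae_of_all _ fun _ => norm_nonneg _)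

lemma tendsto_setLIntegral_Ioi_atTop {f : ℝ → ENNReal} {a : ℝ}
    (hf : ∫⁻ s in Ioi a, f s ≠ ⊤) :
    Tendsto (fun T => ∫⁻ s in Ioi T, f s) atTop (𝓝 0) := by
  set ν := (volume.restrict (Ioi a)).withDensity f
  have hν : ∀ T, a ≤ T → ν (Ioi T) = ∫⁻ s in Ioi T, f s := fun T hT => by
    rw [withDensity_apply _ measurableSet_Ioi, Measure.restrict_restrict measurableSet_Ioi,
      Ioi_inter_Ioi, sup_eq_left.mpr hT]
  have hlim : Tendsto (ν ∘ Ioi) atTop (𝓝 (ν (⋂ T, Ioi T))) :=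
    tendsto_measure_iInter_atTop (fun _ => measurableSet_Ioi.nullMeasurableSet)
      (fun _ _ h => Ioi_subset_Ioi h) ⟨a, (hν a le_rfl).trans_ne hf⟩
  have hempty : (⋂ T : ℝ, Ioi T) = ∅ :=
    eq_empty_iff_forall_notMem.mpr fun t ht => lt_irrefl t (mem_iInter.mp ht t)
  rw [hempty, measure_empty] at hlim
  exact hlim.congr' (eventually_ge_atTop a |>.mono fun T hT => hν T hT)

lemma exists_first_exit {α : Type*} [PseudoMetricSpace α] {γ : ℝ → α} (hγ : Continuous γ)
    {a b ε : ℝ} (hab : a ≤ b) (hb : ε ≤ dist (γ b) (γ a)) :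
    ∃ t ∈ Icc a b, (∀ s ∈ Ico a t, dist (γ s) (γ a) < ε) ∧ ε ≤ dist (γ t) (γ a) := by
  set S := Icc a b ∩ {s | ε ≤ dist (γ s) (γ a)}
  have hS : IsClosed S := isClosed_Icc.inter (isClosed_le continuous_const
    (hγ.dist continuous_const))
  have hbdd : BddBelow S := ⟨a, fun s hs => hs.1.1⟩
  have htS : sInf S ∈ S := hS.csInf_mem ⟨b, ⟨hab, le_rfl⟩, hb⟩ hbdd
  refine ⟨sInf S, htS.1, fun s hs => ?_, htS.2⟩
  by_contra! h
  exact (csInf_le hbdd ⟨⟨hs.1, hs.2.le.trans htS.1.2⟩, h⟩).not_gt hs.2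

section Hessian

variable {n : ℕ} {Ω : Set (Fin n → ℝ)} {Ψ : (Fin n → ℝ) → ℝ}

lemma hessForm_smul (z : Fin n → ℝ) (a : ℝ) (u : Fin n → ℝ) :
    hessForm Ψ z (a • u) = a ^ 2 * hessForm Ψ z u := by
  simp only [hessForm, Finset.mul_sum, Pi.smul_apply, smul_eq_mul]
  exact Finset.sum_congr rfl fun _ _ => Finset.sum_congr rfl fun _ _ => by ring

lemma hessForm_nonneg (hconv : ∀ x ∈ Ω, ∀ u : Fin n → ℝ, u ≠ 0 → 0 < hessForm Ψ x u)
    {z : Fin n → ℝ} (hz : z ∈ Ω) (u : Fin n → ℝ) : 0 ≤ hessForm Ψ z u := by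
  rcases eq_or_ne u 0 with rfl | hu
  · simp [hessForm]
  · exact (hconv z hz u hu).le

lemma continuousOn_hessForm (hΩ : IsOpen Ω) (hΨ : ContDiffOn ℝ 2 Ψ Ω) :
    ContinuousOn (fun p : (Fin n → ℝ) × (Fin n → ℝ) => hessForm Ψ p.1 p.2) (Ω ×ˢ univ) := by
  have hcoef : ∀ i j : Fin n, ContinuousOn
      (fun z => fderiv ℝ (fun w => fderiv ℝ Ψ w (Pi.single i 1)) z (Pi.single j 1)) Ω := by
    intro i j
    have hDi : ContDiffOn ℝ 1 (fun w => fderiv ℝ Ψ w (Pi.single i 1)) Ω :=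
      (hΨ.fderiv_of_isOpen hΩ (by norm_num)).clm_apply contDiffOn_const
    exact ((hDi.fderiv_of_isOpen (m := 0) hΩ (by norm_num)).continuousOn).clm_apply
      continuousOn_const
  simp only [hessForm]
  refine continuousOn_finsetSum _ fun i _ => continuousOn_finsetSum _ fun j _ => ?_
  refine (((continuous_apply i).comp continuous_snd).mul
    ((continuous_apply j).comp continuous_snd)).continuousOn.mul ?_
  exact (hcoef i j).comp continuous_fst.continuousOn fun p hp => hp.1

lemma exists_pos_mul_sq_le_hessForm (hΩ : IsOpen Ω) (hΨ : ContDiffOn ℝ 2 Ψ Ω)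
    (hconv : ∀ x ∈ Ω, ∀ u : Fin n → ℝ, u ≠ 0 → 0 < hessForm Ψ x u)
    {K : Set (Fin n → ℝ)} (hK : IsCompact K) (hKΩ : K ⊆ Ω) :
    ∃ c > 0, ∀ z ∈ K, ∀ u, c * ‖u‖ ^ 2 ≤ hessForm Ψ z u := by
  obtain ⟨c, hc, hcH⟩ := (hK.prod (isCompact_sphere (0 : Fin n → ℝ) 1)).exists_forall_le'
    ((continuousOn_hessForm hΩ hΨ).mono (prod_mono hKΩ (subset_univ _)))
    fun p hp => hconv p.1 (hKΩ hp.1) p.2 (ne_zero_of_mem_unit_sphere ⟨p.2, hp.2⟩)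
  refine ⟨c, hc, fun z hz u => ?_⟩
  rcases eq_or_ne u 0 with rfl | hu
  · simp [hessForm]
  have hu' : ‖u‖ ≠ 0 := norm_ne_zero_iff.mpr hu
  have hunit : ‖u‖⁻¹ • u ∈ sphere (0 : Fin n → ℝ) 1 := by
    rw [mem_sphere_zero_iff_norm, norm_smul, norm_inv, norm_norm, inv_mul_cancel₀ hu']
  calc c * ‖u‖ ^ 2 ≤ hessForm Ψ z (‖u‖⁻¹ • u) * ‖u‖ ^ 2 :=
        mul_le_mul_of_nonneg_right (hcH (z, _) ⟨hz, hunit⟩) (sq_nonneg _)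
    _ = hessForm Ψ z u := by
        rw [mul_comm, ← hessForm_smul, smul_smul, mul_inv_cancel₀ hu', one_smul]

end Hessian

lemma sqrt_mul_norm_prod_le_sqrt_add {E F : Type*} [SeminormedAddCommGroup E]
    [SeminormedAddCommGroup F] {c A B : ℝ} {u : E} {v : F} (hc : 0 ≤ c)
    (hA : c * ‖u‖ ^ 2 ≤ A) (hB : c * ‖v‖ ^ 2 ≤ B) : √c * ‖(u, v)‖ ≤ √(A + B) := by
  have hmax : ‖(u, v)‖ ^ 2 ≤ ‖u‖ ^ 2 + ‖v‖ ^ 2 := by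
    rcases max_cases ‖u‖ ‖v‖ with ⟨h, _⟩ | ⟨h, _⟩ <;> rw [Prod.norm_def, h]
    exacts [le_add_of_nonneg_right (sq_nonneg _), le_add_of_nonneg_left (sq_nonneg _)]
  calc √c * ‖(u, v)‖ = √(c * ‖(u, v)‖ ^ 2) := by
        rw [Real.sqrt_mul hc, Real.sqrt_sq (norm_nonneg _)]
    _ ≤ √(A + B) := Real.sqrt_le_sqrt <| by
        linarith [mul_le_mul_of_nonneg_left hmax hc, mul_add c (‖u‖ ^ 2) (‖v‖ ^ 2)]

section Tube

variable {n : ℕ} {Ω : Set (Fin n → ℝ)} {Ψ : (Fin n → ℝ) → ℝ} {x y : ℝ → Fin n → ℝ}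

noncomputable def tubeSpeed (Ψ : (Fin n → ℝ) → ℝ) (x y : ℝ → Fin n → ℝ) (s : ℝ) : ℝ :=
  √(hessForm Ψ (x s) (deriv x s) + hessForm Ψ (x s) (deriv y s))

lemma ofReal_mul_norm_sub_le_lintegral_tubeSpeed {K : Set (Fin n → ℝ)} {c a b : ℝ}
    (hc : 0 ≤ c) (hcH : ∀ z ∈ K, ∀ u, c * ‖u‖ ^ 2 ≤ hessForm Ψ z u)
    (hx : ContDiff ℝ 1 x) (hy : ContDiff ℝ 1 y) (hab : a ≤ b)
    (hxK : ∀ s ∈ Ioo a b, x s ∈ K) :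
    ENNReal.ofReal (√c * ‖(x b, y b) - (x a, y a)‖) ≤
      ∫⁻ s in Ioo a b, ENNReal.ofReal (tubeSpeed Ψ x y s) := by
  have hdx := hx.differentiable one_ne_zero
  have hdy := hy.differentiable one_ne_zero
  have hderiv : deriv (fun s => (x s, y s)) = fun s => (deriv x s, deriv y s) :=
    funext fun s => ((hdx s).hasDerivAt.prodMk (hdy s).hasDerivAt).deriv
  calc ENNReal.ofReal (√c * ‖(x b, y b) - (x a, y a)‖)
      = ENNReal.ofReal √c * ENNReal.ofReal ‖(x b, y b) - (x a, y a)‖ :=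
        ENNReal.ofReal_mul (Real.sqrt_nonneg c)
    _ ≤ ENNReal.ofReal √c * ∫⁻ s in Ioo a b, ENNReal.ofReal ‖(deriv x s, deriv y s)‖ := by
        gcongr
        simpa only [hderiv] using ofReal_norm_sub_le_lintegral_norm_deriv (hx.prodMk hy) hab
    _ = ∫⁻ s in Ioo a b, ENNReal.ofReal (√c * ‖(deriv x s, deriv y s)‖) := by
        rw [← lintegral_const_mul' _ _ ENNReal.ofReal_ne_top]
        simp only [ENNReal.ofReal_mul (Real.sqrt_nonneg c)]
    _ ≤ ∫⁻ s in Ioo a b, ENNReal.ofReal (tubeSpeed Ψ x y s) :=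
        setLIntegral_mono' measurableSet_Ioo fun s hs => ENNReal.ofReal_le_ofReal <|
          sqrt_mul_norm_prod_le_sqrt_add hc (hcH _ (hxK s hs) _) (hcH _ (hxK s hs) _)

lemma not_escapesCompacts_of_lintegral_tubeSpeed_ne_top
    (hconv : ∀ x ∈ Ω, ∀ u : Fin n → ℝ, u ≠ 0 → 0 < hessForm Ψ x u)
    (hbase : HessianComplete Ω Ψ) (hx : ContDiff ℝ 1 x) (hxΩ : ∀ s, 0 ≤ s → x s ∈ Ω)
    (hfin : ∫⁻ s in Ioi (0 : ℝ), ENNReal.ofReal (tubeSpeed Ψ x y s) ≠ ⊤) :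
    ¬ EscapesCompacts Ω x := fun hesc => hfin <| top_le_iff.mp <|
  (hbase x hx hxΩ hesc).symm.le.trans <| setLIntegral_mono' measurableSet_Ioi fun s hs =>
    ENNReal.ofReal_le_ofReal <| Real.sqrt_le_sqrt <|
      le_add_of_nonneg_right (hessForm_nonneg hconv (hxΩ s (le_of_lt hs)) _)

end Tube

theorem tube_complete_of_base_complete_general {n : ℕ} (Ω : Set (Fin n → ℝ))
    (hΩo : IsOpen Ω) (Ψ : (Fin n → ℝ) → ℝ)
    (hΨ : ContDiffOn ℝ 2 Ψ Ω)
    (hconv : ∀ x ∈ Ω, ∀ u : Fin n → ℝ, u ≠ 0 → 0 < hessForm Ψ x u)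
    (hbase : HessianComplete Ω Ψ) :
    TubeComplete Ω Ψ := by
  intro x y hx hy hxΩ hesc
  change ∫⁻ s in Ioi (0 : ℝ), ENNReal.ofReal (tubeSpeed Ψ x y s) = ⊤
  by_contra hfin
  obtain ⟨K, hK, hKΩ, hret⟩ : ∃ K, IsCompact K ∧ K ⊆ Ω ∧ ∀ T, ∃ s, T ≤ s ∧ x s ∈ K := by
    simpa [EscapesCompacts] using
      not_escapesCompacts_of_lintegral_tubeSpeed_ne_top hconv hbase hx hxΩ hfin
  obtain ⟨ε, hε, hKε⟩ := hK.exists_cthickening_subset_open hΩo hKΩ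
  obtain ⟨c, hc, hcH⟩ := exists_pos_mul_sq_le_hessForm hΩo hΨ hconv hK.cthickening hKε
  obtain ⟨T, hT⟩ := ((tendsto_setLIntegral_Ioi_atTop hfin).eventually_lt_const
    (ENNReal.ofReal_pos.mpr (mul_pos (Real.sqrt_pos.mpr hc) hε))).exists
  obtain ⟨s₀, hs₀T, hs₀K⟩ := hret T
  have hball : closedBall (x s₀) ε ⊆ Ω := (closedBall_subset_cthickening hs₀K ε).trans hKε
  obtain ⟨b, hb⟩ := hesc (closedBall (x s₀, y s₀) ε) (isCompact_closedBall _ _) <| by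
    rw [← closedBall_prod_same]; exact prod_mono hball (subset_univ _)
  obtain ⟨t, hts, hin, hout⟩ := exists_first_exit (hx.continuous.prodMk hy.continuous)
    (le_max_left s₀ b) <| le_of_not_ge fun h => hb _ (le_max_right s₀ b) (mem_closedBall.mpr h)
  have hlen := ofReal_mul_norm_sub_le_lintegral_tubeSpeed (Ψ := Ψ) hc.le hcH hx hy hts.1
    fun s hs => closedBall_subset_cthickening hs₀K ε <| mem_closedBall.mpr <|
      (le_max_left _ _).trans (hin s ⟨hs.1.le, hs.2⟩).le
  refine hT.not_ge (le_trans ?_ (hlen.trans (lintegral_mono_set ?_)))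
  · rw [← dist_eq_norm]; gcongr
  · exact fun s hs => lt_of_le_of_lt hs₀T hs.1

/-- If the Hessian metric `g = D²Ψ` of a `C²` strongly convex potential `Ψ` on a
convex open domain `Ω ⊆ ℝⁿ` is complete, then the Kähler Sasaki metric on the tube
domain `TΩ = Ω × ℝⁿ` is complete. -/
theorem tube_complete_of_base_complete {n : ℕ} (Ω : Set (Fin n → ℝ))
    (hΩo : IsOpen Ω) (hΩc : Convex ℝ Ω) (Ψ : (Fin n → ℝ) → ℝ)
    (hΨ : ContDiffOn ℝ 2 Ψ Ω)
    (hconv : ∀ x ∈ Ω, ∀ u : Fin n → ℝ, u ≠ 0 → 0 < hessForm Ψ x u)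
    (hbase : HessianComplete Ω Ψ) :
    TubeComplete Ω Ψ :=
  tube_complete_of_base_complete_general Ω hΩo Ψ hΨ hconv hbase
end

section
/- Let $\phi$ be a smooth strictly convex radial potential on the ball $B_a \subseteq \mathbb{R}^n$, $0 < a \le \infty$, with $f(r) = \phi'(r)/r$ and $h(r) = f(r) + r f'(r)$, both positive on $[0,a)$. Then the rotationally symmetric Hessian metric $g_{\Psi}$ with $\Psi(x) = \phi(|x|)$ is complete if and only if $\int_0^a \sqrt{h(r)}\, dr = \infty$. -/
/-!
Write `h = f + r² fdot` and `ρ = |γ|` along a curve `γ`. Where `ρ > 0`, Cauchy–Schwarz and `f ≥ 0`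
give `h(ρ) ρ'² ≤ g_Ψ(γ', γ')`, so a curve that runs from radius `c` to radius `b` has length at
least `∫_c^b √h`. A curve escaping every compact set reaches every radius `b < a`, hence has
length at least `∫_c^a √h`. Conversely, a ray `s ↦ ρ(s) e₁` with `ρ` increasing onto `[0, a)` has
length exactly `∫_0^a √h`, and it escapes every compact set.
-/

open Set MeasureTheory ENNReal

/-- Euclidean radius of `x`. -/
noncomputable def rad {n : ℕ} (x : Fin n → ℝ) : ℝ := Real.sqrt (∑ i, x i ^ 2)

/-- The rotationally symmetric Hessian metric `Ψ_{ij} = f δ_{ij} + (f'/r) xᵢxⱼ`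
(with `fdot = f'/r`) as a quadratic form at `x` applied to `u`. -/
noncomputable def rotForm {n : ℕ} (f fdot : ℝ → ℝ) (x u : Fin n → ℝ) : ℝ :=
  f (rad x) * (∑ i, u i ^ 2) + fdot (rad x) * (∑ i, x i * u i) ^ 2

/-- Completeness of the rotationally symmetric Hessian metric on the ball of
radius `a` (`a = ⊤` allowed): every `C¹` curve in the ball escaping all compact
subsets has infinite length. -/
def RotComplete (n : ℕ) (a : ℝ≥0∞) (f fdot : ℝ → ℝ) : Prop :=
  ∀ γ : ℝ → (Fin n → ℝ), ContDiff ℝ 1 γ →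
    (∀ s, 0 ≤ s → ENNReal.ofReal (rad (γ s)) < a) →
    EscapesCompacts {x : Fin n → ℝ | ENNReal.ofReal (rad x) < a} γ →
    ∫⁻ s in Ioi (0:ℝ),
      ENNReal.ofReal (Real.sqrt (rotForm f fdot (γ s) (deriv γ s))) = ⊤

open Filter Topology

abbrev radii (a : ℝ≥0∞) : Set ℝ := {r | 0 ≤ r ∧ ENNReal.ofReal r < a}

noncomputable def rotLength {n : ℕ} (f fdot : ℝ → ℝ) (γ : ℝ → Fin n → ℝ) : ℝ≥0∞ :=
  ∫⁻ s in Ioi 0, ENNReal.ofReal √(rotForm f fdot (γ s) (deriv γ s))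

section Radius

variable {n : ℕ}

lemma rad_nonneg (x : Fin n → ℝ) : 0 ≤ rad x := Real.sqrt_nonneg _

lemma rad_sq (x : Fin n → ℝ) : rad x ^ 2 = ∑ i, x i ^ 2 :=
  Real.sq_sqrt (Finset.sum_nonneg fun _ _ => sq_nonneg _)

@[fun_prop]
lemma continuous_rad : Continuous (rad (n := n)) := by
  unfold rad; fun_prop

lemma abs_le_rad (x : Fin n → ℝ) (j : Fin n) : |x j| ≤ rad x := by
  rw [← Real.sqrt_sq_eq_abs]
  exact Real.sqrt_le_sqrt (Finset.single_le_sum (fun i _ => sq_nonneg (x i)) (Finset.mem_univ j))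

lemma isCompact_rad_le (b : ℝ) : IsCompact {x : Fin n → ℝ | rad x ≤ b} := by
  refine Metric.isCompact_of_isClosed_isBounded (isClosed_le continuous_rad continuous_const) ?_
  refine (Metric.isBounded_iff_subset_closedBall 0).2 ⟨b, fun x hx => ?_⟩
  rw [Metric.mem_closedBall, dist_zero_right]
  exact (pi_norm_le_iff_of_nonneg ((rad_nonneg x).trans hx)).2 fun j => (abs_le_rad x j).trans hx

lemma rad_smul_single (j : Fin n) (c : ℝ) : rad (c • Pi.single j 1 : Fin n → ℝ) = |c| := by
  simp [rad, Pi.single_apply, Real.sqrt_sq_eq_abs]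

lemma hasDerivAt_rad_comp {γ : ℝ → Fin n → ℝ} {γ' : Fin n → ℝ} {s : ℝ} (hγ : HasDerivAt γ γ' s)
    (hs : 0 < rad (γ s)) :
    HasDerivAt (fun t => rad (γ t)) ((∑ i, γ s i * γ' i) / rad (γ s)) s := by
  have hsum : HasDerivAt (fun t => ∑ i, γ t i ^ 2) (∑ i, 2 * γ s i * γ' i) s := by
    refine HasDerivAt.fun_sum fun i _ => ?_
    simpa using (hasDerivAt_pi.1 hγ i).fun_pow 2
  have hne : ∑ i, γ s i ^ 2 ≠ 0 := by rw [← rad_sq]; positivity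
  refine (hsum.sqrt hne).congr_deriv ?_
  rw [← rad]
  simp only [mul_assoc, ← Finset.mul_sum]
  field_simp

end Radius

section RotForm

variable {n : ℕ} (f fdot : ℝ → ℝ)

lemma rotForm_smul_single (j : Fin n) (c v : ℝ) :
    rotForm f fdot (c • Pi.single j 1) (v • Pi.single j 1) =
      (f |c| + c ^ 2 * fdot |c|) * v ^ 2 := by
  simp [rotForm, rad_smul_single, Pi.single_apply, mul_pow, add_mul, mul_comm, mul_assoc]

lemma radial_le_rotForm (x u : Fin n → ℝ) (hx : 0 < rad x) (hf : 0 ≤ f (rad x)) :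
    (f (rad x) + rad x ^ 2 * fdot (rad x)) * ((∑ i, x i * u i) / rad x) ^ 2 ≤
      rotForm f fdot x u := by
  have hCS : (∑ i, x i * u i) ^ 2 / rad x ^ 2 ≤ ∑ i, u i ^ 2 := by
    rw [div_le_iff₀ (by positivity), rad_sq, mul_comm]
    exact Finset.sum_mul_sq_le_sq_mul_sq _ _ _
  calc (f (rad x) + rad x ^ 2 * fdot (rad x)) * ((∑ i, x i * u i) / rad x) ^ 2
      = f (rad x) * ((∑ i, x i * u i) ^ 2 / rad x ^ 2) + fdot (rad x) * (∑ i, x i * u i) ^ 2 := by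
        field_simp
    _ ≤ rotForm f fdot x u := by
        rw [rotForm]
        gcongr

lemma sqrt_radial_mul_le_sqrt_rotForm (x u : Fin n → ℝ) (hx : 0 < rad x) (hf : 0 ≤ f (rad x)) :
    √(f (rad x) + rad x ^ 2 * fdot (rad x)) * ((∑ i, x i * u i) / rad x) ≤
      √(rotForm f fdot x u) := by
  rcases le_or_gt ((∑ i, x i * u i) / rad x) 0 with hneg | hpos
  · exact (mul_nonpos_of_nonneg_of_nonpos (Real.sqrt_nonneg _) hneg).trans (Real.sqrt_nonneg _)
  · rw [← Real.sqrt_sq hpos.le, ← Real.sqrt_mul' _ (sq_nonneg _)]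
    exact Real.sqrt_le_sqrt (radial_le_rotForm f fdot x u hx hf)

lemma continuousOn_rotForm_comp {D S : Set ℝ} (hf : ContinuousOn f D) (hfd : ContinuousOn fdot D)
    {γ : ℝ → Fin n → ℝ} (hγ : ContDiff ℝ 1 γ) (hS : MapsTo (fun s => rad (γ s)) S D) :
    ContinuousOn (fun s => rotForm f fdot (γ s) (deriv γ s)) S := by
  have hγc : Continuous γ := hγ.continuous
  have hγ' : Continuous (deriv γ) := hγ.continuous_deriv le_rfl
  have hr : ContinuousOn (fun s => rad (γ s)) S := by fun_prop
  unfold rotForm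
  exact ((hf.comp hr hS).mul (by fun_prop)).add ((hfd.comp hr hS).mul (by fun_prop))

end RotForm

section Curves

variable {n : ℕ} {a : ℝ≥0∞} {γ : ℝ → Fin n → ℝ}

lemma escapesCompacts_of_eventually_lt_rad
    (h : ∀ m, ENNReal.ofReal m < a → ∀ᶠ s in atTop, m < rad (γ s)) :
    EscapesCompacts {x : Fin n → ℝ | ENNReal.ofReal (rad x) < a} γ := by
  intro K hK hKa
  rcases K.eq_empty_or_nonempty with rfl | hne
  · exact ⟨0, fun _ _ => id⟩
  obtain ⟨x₀, hx₀, hmax⟩ := hK.exists_isMaxOn hne continuous_rad.continuousOn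
  obtain ⟨T, hT⟩ := eventually_atTop.1 (h _ (hKa hx₀))
  exact ⟨T, fun s hs hsK => (hT s hs).not_ge (hmax hsK)⟩

lemma EscapesCompacts.exists_lt_rad
    (hesc : EscapesCompacts {x : Fin n → ℝ | ENNReal.ofReal (rad x) < a} γ) {b : ℝ}
    (hb : ENNReal.ofReal b < a) : ∃ T, 0 ≤ T ∧ b < rad (γ T) := by
  obtain ⟨T, hT⟩ := hesc _ (isCompact_rad_le b)
    fun x hx => (ENNReal.ofReal_le_ofReal hx).trans_lt hb
  exact ⟨max T 0, le_max_right _ _, not_le.1 (hT _ (le_max_left _ _))⟩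

end Curves

lemma Continuous.exists_last_eq_of_le_of_lt {ρ : ℝ → ℝ} (hρ : Continuous ρ) {c T : ℝ} (hT : 0 ≤ T)
    (h0 : ρ 0 ≤ c) (hTc : c < ρ T) :
    ∃ s₁ ∈ Icc 0 T, ρ s₁ = c ∧ ∀ s ∈ Icc s₁ T, c ≤ ρ s := by
  set A := Icc 0 T ∩ {s | ρ s ≤ c}
  have hA : IsCompact A := isCompact_Icc.inter_right (isClosed_le hρ continuous_const)
  obtain ⟨⟨hs₁0, hs₁T⟩, hs₁c⟩ : sSup A ∈ A := hA.sSup_mem ⟨0, ⟨le_rfl, hT⟩, h0⟩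
  have hafter : ∀ s ∈ Ioc (sSup A) T, c < ρ s := fun s hs =>
    not_le.1 fun hsc => hs.1.not_ge (le_csSup hA.bddAbove ⟨⟨hs₁0.trans hs.1.le, hs.2⟩, hsc⟩)
  have hat : c ≤ ρ (sSup A) := by
    by_contra! hlt
    obtain ⟨s, hs, hsc⟩ :=
      intermediate_value_Icc hs₁T hρ.continuousOn ⟨hlt.le, hTc.le⟩
    rcases hs.1.eq_or_lt with rfl | hgt
    · exact hlt.ne hsc
    · exact (hafter s ⟨hgt, hs.2⟩).ne' hsc
  refine ⟨sSup A, ⟨hs₁0, hs₁T⟩, hat.antisymm' hs₁c, fun s hs => ?_⟩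
  rcases hs.1.eq_or_lt with rfl | hgt
  · exact hat
  · exact (hafter s ⟨hgt, hs.2⟩).le

lemma ofReal_intervalIntegral_eq_lintegral_Ioc {φ : ℝ → ℝ} {x y : ℝ} (hxy : x ≤ y)
    (hφ : ContinuousOn φ (Icc x y)) (hφ0 : ∀ t, 0 ≤ φ t) :
    ENNReal.ofReal (∫ t in x..y, φ t) = ∫⁻ t in Ioc x y, ENNReal.ofReal (φ t) := by
  rw [intervalIntegral.integral_of_le hxy]
  exact ofReal_integral_eq_lintegral_ofReal
    ((hφ.integrableOn_Icc).mono_set Ioc_subset_Icc_self) (ae_of_all _ hφ0)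

lemma setLIntegral_le_of_forall_Ioc_le {F : ℝ → ℝ≥0∞} {c : ℝ} {a Λ : ℝ≥0∞}
    (hF : ∀ b, ENNReal.ofReal b < a → ∫⁻ r in Ioc c b, F r ≤ Λ) :
    ∫⁻ r in {r | c < r ∧ ENNReal.ofReal r < a}, F r ≤ Λ := by
  let s : {q : ℚ // ENNReal.ofReal q < a} → Set ℝ := fun q => Ioc c q
  have hdir : Directed (· ⊆ ·) s := fun p q =>
    ⟨⟨max p q, by rw [Rat.cast_max, ENNReal.ofReal_max]; exact max_lt p.2 q.2⟩,
      Ioc_subset_Ioc_right (by exact_mod_cast le_max_left _ _),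
      Ioc_subset_Ioc_right (by exact_mod_cast le_max_right _ _)⟩
  have hcover : {r | c < r ∧ ENNReal.ofReal r < a} ⊆ ⋃ q, s q := by
    rintro r ⟨hcr, hra⟩
    obtain ⟨t, -, hrt, hta⟩ := ENNReal.lt_iff_exists_real_btwn.1 hra
    obtain ⟨q, hrq, hqt⟩ := exists_rat_btwn ((ENNReal.ofReal_lt_ofReal_iff'.1 hrt).1)
    exact mem_iUnion.2 ⟨⟨q, (ENNReal.ofReal_le_ofReal hqt.le).trans_lt hta⟩, hcr, hrq.le⟩
  calc ∫⁻ r in {r | c < r ∧ ENNReal.ofReal r < a}, F r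
      ≤ ∫⁻ r in ⋃ q, s q, F r := lintegral_mono_set hcover
    _ = ⨆ q, ∫⁻ r in s q, F r := setLIntegral_iUnion_of_directed F hdir
    _ ≤ Λ := iSup_le fun q => hF q q.2

section Length

variable {n : ℕ} {a : ℝ≥0∞} {f fdot : ℝ → ℝ}

lemma lintegral_Ioc_le_rotLength (hf : ContinuousOn f (radii a))
    (hfd : ContinuousOn fdot (radii a)) (hfnn : ∀ r ∈ radii a, 0 ≤ f r)
    {γ : ℝ → Fin n → ℝ} (hγ : ContDiff ℝ 1 γ)
    (hball : ∀ s, 0 ≤ s → ENNReal.ofReal (rad (γ s)) < a) {c T : ℝ} (hc : 0 < c)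
    (h0 : rad (γ 0) ≤ c) (hT : 0 ≤ T) :
    ∫⁻ r in Ioc c (rad (γ T)), ENNReal.ofReal √(f r + r ^ 2 * fdot r) ≤ rotLength f fdot γ := by
  set ρ : ℝ → ℝ := fun s => rad (γ s)
  set ρ' : ℝ → ℝ := fun s => (∑ i, γ s i * deriv γ s i) / ρ s
  set g : ℝ → ℝ := fun s => √(rotForm f fdot (γ s) (deriv γ s))
  rcases le_or_gt (ρ T) c with hTc | hcT
  · simp [ρ, Ioc_eq_empty_of_le hTc]
  have hρ : Continuous ρ := by fun_prop
  -- after the last time `s₁ ≤ T` with `|γ| = c`, `|γ| ≥ c > 0` is differentiable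
  obtain ⟨s₁, ⟨hs₁0, hs₁T⟩, hρs₁, hcρ⟩ := hρ.exists_last_eq_of_le_of_lt hT h0 hcT
  rw [← uIcc_of_le hs₁T] at hcρ
  have hρa : MapsTo ρ (uIcc s₁ T) (radii a) := fun s hs =>
    ⟨rad_nonneg _, hball s (hs₁0.trans (uIcc_of_le hs₁T ▸ hs).1)⟩
  have hsqrt : ContinuousOn (fun r => √(f r + r ^ 2 * fdot r)) (radii a) := by fun_prop
  have hderiv : ∀ s ∈ uIcc s₁ T, HasDerivAt ρ (ρ' s) s := fun s hs =>
    hasDerivAt_rad_comp (hγ.differentiable one_ne_zero s).hasDerivAt (hc.trans_le (hcρ s hs))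
  have hρ' : ContinuousOn ρ' (uIcc s₁ T) := by
    have := hγ.continuous; have := hγ.continuous_deriv le_rfl
    exact ContinuousOn.div (by fun_prop) hρ.continuousOn fun s hs => (hc.trans_le (hcρ s hs)).ne'
  have hradial : ContinuousOn (fun s => √(f (ρ s) + ρ s ^ 2 * fdot (ρ s)) * ρ' s) (uIcc s₁ T) :=
    (hsqrt.comp hρ.continuousOn hρa).mul hρ'
  have hg : ContinuousOn g (uIcc s₁ T) :=
    (continuousOn_rotForm_comp f fdot hf hfd hγ hρa).sqrt
  calc ∫⁻ r in Ioc c (ρ T), ENNReal.ofReal √(f r + r ^ 2 * fdot r)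
      = ENNReal.ofReal (∫ r in c..ρ T, √(f r + r ^ 2 * fdot r)) := by
        refine (ofReal_intervalIntegral_eq_lintegral_Ioc hcT.le (hsqrt.mono fun r hr => ?_)
          fun _ => Real.sqrt_nonneg _).symm
        exact ⟨hc.le.trans hr.1, (ENNReal.ofReal_le_ofReal hr.2).trans_lt (hball T hT)⟩
    _ = ENNReal.ofReal (∫ s in s₁..T, √(f (ρ s) + ρ s ^ 2 * fdot (ρ s)) * ρ' s) := by
        rw [← hρs₁, ← intervalIntegral.integral_comp_mul_deriv' hderiv hρ'
          (hsqrt.mono (image_subset_iff.2 hρa))]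
        rfl
    _ ≤ ENNReal.ofReal (∫ s in s₁..T, g s) := by
        refine ENNReal.ofReal_le_ofReal (intervalIntegral.integral_mono_on hs₁T
          hradial.intervalIntegrable hg.intervalIntegrable fun s hs => ?_)
        have hs' : s ∈ uIcc s₁ T := uIcc_of_le hs₁T ▸ hs
        exact sqrt_radial_mul_le_sqrt_rotForm f fdot _ _ (hc.trans_le (hcρ s hs'))
          (hfnn _ (hρa hs'))
    _ = ∫⁻ s in Ioc s₁ T, ENNReal.ofReal (g s) :=
        ofReal_intervalIntegral_eq_lintegral_Ioc hs₁T (uIcc_of_le hs₁T ▸ hg)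
          fun _ => Real.sqrt_nonneg _
    _ ≤ rotLength f fdot γ := lintegral_mono_set fun s hs => hs₁0.trans_lt hs.1

end Length

lemma exists_contDiff_strictMono_exhausting {a : ℝ≥0∞} (ha : 0 < a) :
    ∃ ρ : ℝ → ℝ, ContDiff ℝ 1 ρ ∧ StrictMono ρ ∧ ρ 0 = 0 ∧ (∀ s, ENNReal.ofReal (ρ s) < a) ∧
      ∀ m, ENNReal.ofReal m < a → ∀ᶠ s in atTop, m < ρ s := by
  rcases eq_or_ne a ⊤ with rfl | haT
  · exact ⟨id, contDiff_id, strictMono_id, rfl, fun _ => ofReal_lt_top,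
      fun m _ => tendsto_id.eventually_gt_atTop m⟩
  obtain ⟨A, hA, rfl⟩ : ∃ A : ℝ, 0 < A ∧ a = ENNReal.ofReal A :=
    ⟨a.toReal, ENNReal.toReal_pos ha.ne' haT, (ENNReal.ofReal_toReal haT).symm⟩
  have hk : 0 < 2 * A / Real.pi := by positivity
  have hk' : 2 * A / Real.pi * (Real.pi / 2) = A := by field_simp
  have hlim : Tendsto (fun s => 2 * A / Real.pi * Real.arctan s) atTop (𝓝 A) := by
    simpa only [hk'] using
      (Real.tendsto_arctan_atTop.mono_right nhdsWithin_le_nhds).const_mul (2 * A / Real.pi)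
  refine ⟨fun s => 2 * A / Real.pi * Real.arctan s, contDiff_const.mul Real.contDiff_arctan,
    Real.arctan_strictMono.const_mul hk, by simp, fun s => ?_, fun m hm => ?_⟩
  · rw [ENNReal.ofReal_lt_ofReal_iff hA]
    exact (mul_lt_mul_of_pos_left (Real.arctan_lt_pi_div_two s) hk).trans_eq hk'
  · exact hlim.eventually_const_lt ((ENNReal.ofReal_lt_ofReal_iff hA).1 hm)

section Radial

variable {n : ℕ} (f fdot : ℝ → ℝ)

lemma rotLength_smul_single {ρ : ℝ → ℝ} (hρ : Differentiable ℝ ρ) (hinj : InjOn ρ (Ioi 0))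
    (hnn : ∀ s, 0 < s → 0 ≤ ρ s) (j : Fin n) :
    rotLength f fdot (fun s => ρ s • (Pi.single j 1 : Fin n → ℝ)) =
      ∫⁻ r in ρ '' Ioi 0, ENNReal.ofReal √(f r + r ^ 2 * fdot r) := by
  rw [lintegral_image_eq_lintegral_abs_deriv_mul measurableSet_Ioi
    (fun s _ => (hρ s).hasDerivAt.hasDerivWithinAt) hinj, rotLength]
  refine setLIntegral_congr_fun measurableSet_Ioi fun s hs => ?_
  rw [deriv_smul_const (hρ s), rotForm_smul_single, abs_of_nonneg (hnn s hs),
    Real.sqrt_mul' _ (sq_nonneg _), Real.sqrt_sq_eq_abs, ENNReal.ofReal_mul (Real.sqrt_nonneg _),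
    mul_comm]

end Radial

section Completeness

variable {n : ℕ} {a : ℝ≥0∞} {f fdot : ℝ → ℝ}

lemma lintegral_sqrt_eq_top_of_rotComplete (hn : 1 ≤ n) (ha : 0 < a)
    (hcomplete : RotComplete n a f fdot) :
    ∫⁻ r in {r : ℝ | 0 < r ∧ ENNReal.ofReal r < a},
      ENNReal.ofReal √(f r + r ^ 2 * fdot r) = ⊤ := by
  obtain ⟨ρ, hρ, hmono, hρ0, hρa, hρlim⟩ := exists_contDiff_strictMono_exhausting ha
  have hpos : ∀ s, 0 < s → 0 < ρ s := fun s hs => hρ0 ▸ hmono hs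
  set e : Fin n → ℝ := Pi.single ⟨0, hn⟩ 1
  have hrad : ∀ s, rad (ρ s • e) = |ρ s| := fun s => rad_smul_single _ _
  have hlength : rotLength f fdot (fun s => ρ s • e) = ⊤ := by
    refine hcomplete _ (hρ.smul contDiff_const) (fun s hs => ?_) ?_
    · rw [hrad, abs_of_nonneg (hρ0 ▸ hmono.monotone hs)]
      exact hρa s
    · exact escapesCompacts_of_eventually_lt_rad fun m hm =>
        (hρlim m hm).mono fun s hs => hs.trans_le (hrad s ▸ le_abs_self _)
  refine top_unique ?_
  rw [← hlength, rotLength_smul_single f fdot (hρ.differentiable one_ne_zero)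
    hmono.injective.injOn fun s hs => (hpos s hs).le]
  exact lintegral_mono_set (image_subset_iff.2 fun s hs => ⟨hpos s hs, hρa s⟩)

lemma rotComplete_of_lintegral_sqrt_eq_top (hf : ContinuousOn f (radii a))
    (hfd : ContinuousOn fdot (radii a)) (hfnn : ∀ r ∈ radii a, 0 ≤ f r)
    (hint : ∫⁻ r in {r : ℝ | 0 < r ∧ ENNReal.ofReal r < a},
      ENNReal.ofReal √(f r + r ^ 2 * fdot r) = ⊤) :
    RotComplete n a f fdot := by
  intro γ hγ hball hesc
  change rotLength f fdot γ = ⊤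
  obtain ⟨c, -, h0c, hca⟩ := ENNReal.lt_iff_exists_real_btwn.1 (hball 0 le_rfl)
  obtain ⟨h0c, hc⟩ := ENNReal.ofReal_lt_ofReal_iff'.1 h0c
  have hnear : ∫⁻ r in Ioc 0 c, ENNReal.ofReal √(f r + r ^ 2 * fdot r) < ⊤ := by
    rw [← ofReal_intervalIntegral_eq_lintegral_Ioc hc.le _ fun _ => Real.sqrt_nonneg _]
    · exact ofReal_lt_top
    · refine ContinuousOn.mono (by fun_prop) fun r hr => ?_
      exact ⟨hr.1, (ENNReal.ofReal_le_ofReal hr.2).trans_lt hca⟩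
  have hfar : ∫⁻ r in {r | c < r ∧ ENNReal.ofReal r < a}, ENNReal.ofReal √(f r + r ^ 2 * fdot r)
      ≤ rotLength f fdot γ := by
    refine setLIntegral_le_of_forall_Ioc_le fun b hb => ?_
    obtain ⟨T, hT, hbT⟩ := hesc.exists_lt_rad hb
    exact (lintegral_mono_set (Ioc_subset_Ioc_right hbT.le)).trans
      (lintegral_Ioc_le_rotLength hf hfd hfnn hγ hball hc h0c.le hT)
  have hsplit :
      ⊤ ≤ (∫⁻ r in Ioc 0 c, ENNReal.ofReal √(f r + r ^ 2 * fdot r)) + rotLength f fdot γ :=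
    calc ⊤ = ∫⁻ r in {r : ℝ | 0 < r ∧ ENNReal.ofReal r < a},
          ENNReal.ofReal √(f r + r ^ 2 * fdot r) := hint.symm
      _ ≤ ∫⁻ r in Ioc 0 c ∪ {r | c < r ∧ ENNReal.ofReal r < a},
          ENNReal.ofReal √(f r + r ^ 2 * fdot r) := by
        refine lintegral_mono_set fun r ⟨hr0, hra⟩ => ?_
        exact (le_or_gt r c).imp (fun hrc => ⟨hr0, hrc⟩) fun hcr => ⟨hcr, hra⟩
      _ ≤ _ := lintegral_union_le _ _ _
      _ ≤ _ := add_le_add_right hfar _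
  exact (ENNReal.add_eq_top.1 (top_unique hsplit)).resolve_left hnear.ne

end Completeness

theorem rot_complete_iff_integral_general (n : ℕ) (hn : 1 ≤ n) (a : ℝ≥0∞) (ha : 0 < a)
    (f fdot : ℝ → ℝ)
    (hf : ContDiffOn ℝ 1 f {r : ℝ | 0 ≤ r ∧ ENNReal.ofReal r < a})
    (hfd : ContinuousOn fdot {r : ℝ | 0 ≤ r ∧ ENNReal.ofReal r < a})
    (hfpos : ∀ r ∈ {r : ℝ | 0 ≤ r ∧ ENNReal.ofReal r < a}, 0 < f r) :
    RotComplete n a f fdot ↔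
      ∫⁻ r in {r : ℝ | 0 < r ∧ ENNReal.ofReal r < a},
        ENNReal.ofReal (Real.sqrt (f r + r ^ 2 * fdot r)) = ⊤ :=
  ⟨lintegral_sqrt_eq_top_of_rotComplete hn ha,
    rotComplete_of_lintegral_sqrt_eq_top hf.continuousOn hfd fun r hr => (hfpos r hr).le⟩

/-- A rotationally symmetric Hessian metric with `f = φ'/r > 0` and
`h = f + r f' > 0` on `[0,a)` is complete iff `∫₀^a √h dr = ∞`.
Here `fdot = f'/r`, so that `h = f + r²·fdot`. -/
theorem rot_complete_iff_integral (n : ℕ) (hn : 1 ≤ n) (a : ℝ≥0∞) (ha : 0 < a)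
    (f fdot : ℝ → ℝ)
    (hf : ContDiffOn ℝ 1 f {r : ℝ | 0 ≤ r ∧ ENNReal.ofReal r < a})
    (hfd : ContinuousOn fdot {r : ℝ | 0 ≤ r ∧ ENNReal.ofReal r < a})
    (hrel : ∀ r ∈ {r : ℝ | 0 ≤ r ∧ ENNReal.ofReal r < a},
      HasDerivWithinAt f (r * fdot r) {r : ℝ | 0 ≤ r ∧ ENNReal.ofReal r < a} r)
    (hfpos : ∀ r ∈ {r : ℝ | 0 ≤ r ∧ ENNReal.ofReal r < a}, 0 < f r)
    (hhpos : ∀ r ∈ {r : ℝ | 0 ≤ r ∧ ENNReal.ofReal r < a}, 0 < f r + r ^ 2 * fdot r) :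
    RotComplete n a f fdot ↔
      ∫⁻ r in {r : ℝ | 0 < r ∧ ENNReal.ofReal r < a},
        ENNReal.ofReal (Real.sqrt (f r + r ^ 2 * fdot r)) = ⊤ :=
  rot_complete_iff_integral_general n hn a ha f fdot hf hfd hfpos
end

section
/- Let $\phi$ be a smooth strictly convex radial potential on $B_a \subseteq \mathbb{R}^n$ ($n \ge 3$) with $f = \phi'/r > 0$ and $h = (rf)' > 0$, such that the associated Kähler Sasaki metric is complete and has nonnegative orthogonal bisectional curvature. Then $a = \infty$ and $f$ is constant, so the metric is a constant multiple of the flat Euclidean metric on $\mathbb{C}^n$. -/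
open Set MeasureTheory ENNReal

/-!
Testing the curvature on two coordinate vectors orthogonal to the radial direction gives
`ḟ ≤ 0`, and on the radial vector paired with an orthogonal one gives `(log f)'' ≤ 0`.
The first makes `f` nonincreasing, so `√h ≤ √f ≤ √(f 0)` and completeness forces `a = ∞`.
Then `G = (log f)' = r ḟ / f ≤ 0` is nonincreasing on `(0, ∞)`; if `G r₀ < 0`, then
`r G r ≤ -1` for large `r`, i.e. `h = f (1 + r G) ≤ 0`, which is impossible. So `ḟ ≡ 0`.
-/

/-- The orthogonal bisectional curvature value `4 R^(𝔥)_{u ū v v̄}` of the rotationally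
symmetric Kähler Sasaki metric at radius `r`, expressed via `ḟ, f̈, f⃛` (given as
`fd, fdd, fddd`) and the invariants `α_u, α_v, β = ⟨u,v⟩, λ = ⟨u,v̄⟩` of the unit
vectors `u, v ∈ ℂⁿ` (here `x = r·e₀`, so `α_u = u₀`, `α_v = v₀`). -/
noncomputable def bisecCurv (f fd fdd fddd : ℝ → ℝ) (r : ℝ) (αu αv β lam : ℂ) : ℝ :=
  let h := f r + r ^ 2 * fd r
  let 𝓑 := ((starRingEnd ℂ) β * αu * αv).re
  let 𝓒 := (lam * (starRingEnd ℂ) αu * αv).re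
  (-fd r * (1 + ‖lam‖ ^ 2) - (f r * fd r / h) * ‖β‖ ^ 2
    + (r ^ 2 * fd r ^ 2 / f r - r ^ 2 * fdd r)
        * (‖αu‖ ^ 2 + ‖αv‖ ^ 2 + 2 * 𝓒)
    + ‖αu * αv‖ ^ 2
        * ((4 * r ^ 4 * fd r * fdd r + r ^ 6 * fdd r ^ 2) / h
            - 4 * r ^ 4 * fd r ^ 3 / (f r * h) - r ^ 4 * fddd r)
    + 𝓑 * (4 * r ^ 2 * fd r ^ 2 - 2 * r ^ 2 * f r * fdd r) / h)

section bisecCurv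

variable (f fd fdd fddd : ℝ → ℝ) (r : ℝ)

theorem bisecCurv_zero_zero : bisecCurv f fd fdd fddd r 0 0 0 0 = -fd r := by
  simp [bisecCurv]

theorem bisecCurv_one_zero :
    bisecCurv f fd fdd fddd r 1 0 0 0 = -fd r + (r ^ 2 * fd r ^ 2 / f r - r ^ 2 * fdd r) := by
  simp [bisecCurv]

end bisecCurv

-- `i₀` is the coordinate axis on which the base point `x = r e_{i₀}` lies.
def NonnegOrthBisecAt {n : ℕ} (i₀ : Fin n) (f fd fdd fddd : ℝ → ℝ) (r : ℝ) : Prop :=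
  ∀ u v : Fin n → ℂ, (∑ i, ‖u i‖ ^ 2) = 1 → (∑ i, ‖v i‖ ^ 2) = 1 →
    f r * (∑ i, u i * (starRingEnd ℂ) (v i)) + r ^ 2 * fd r * (u i₀ * (starRingEnd ℂ) (v i₀)) = 0 →
    0 ≤ bisecCurv f fd fdd fddd r (u i₀) (v i₀) (∑ i, u i * v i)
      (∑ i, u i * (starRingEnd ℂ) (v i))

namespace NonnegOrthBisecAt

variable {n : ℕ} {i₀ : Fin n} {f fd fdd fddd : ℝ → ℝ} {r : ℝ}

theorem bisecCurv_single_nonneg (h : NonnegOrthBisecAt i₀ f fd fdd fddd r) {i j : Fin n}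
    (hij : i ≠ j) :
    0 ≤ bisecCurv f fd fdd fddd r ((Pi.single i 1 : Fin n → ℂ) i₀)
      ((Pi.single j 1 : Fin n → ℂ) i₀) 0 0 := by
  have hmul : ∀ g : ℂ → ℂ, g 0 = 0 →
      ∑ k, (Pi.single i 1 : Fin n → ℂ) k * g ((Pi.single j 1 : Fin n → ℂ) k) = 0 := by
    intro g hg
    rw [Finset.sum_eq_single i (fun k _ hk => by simp [hk]) (by simp)]
    simp [hij.symm, hg]
  have horth := hmul (starRingEnd ℂ) (map_zero _)
  have hcross : ∑ k, (Pi.single i 1 : Fin n → ℂ) k * (Pi.single j 1 : Fin n → ℂ) k = 0 :=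
    hmul id rfl
  have hnorm : ∀ k : Fin n, ∑ l, ‖(Pi.single k 1 : Fin n → ℂ) l‖ ^ 2 = 1 := by
    intro k
    rw [Finset.sum_eq_single k (fun l _ hl => by simp [hl]) (by simp)]
    simp
  have h0 :
      (Pi.single i 1 : Fin n → ℂ) i₀ * (starRingEnd ℂ) ((Pi.single j 1 : Fin n → ℂ) i₀) = 0 := by
    rcases eq_or_ne i₀ i with rfl | hi
    · simp [hij.symm]
    · simp [hi]
  simpa [horth, hcross] using h _ _ (hnorm i) (hnorm j) (by simp [horth, h0])

theorem fd_nonpos (h : NonnegOrthBisecAt i₀ f fd fdd fddd r) {i j : Fin n} (hi : i ≠ i₀)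
    (hj : j ≠ i₀) (hij : i ≠ j) : fd r ≤ 0 := by
  have := h.bisecCurv_single_nonneg hij
  rw [Pi.single_eq_of_ne hi.symm, Pi.single_eq_of_ne hj.symm, bisecCurv_zero_zero] at this
  linarith

theorem log_concave (h : NonnegOrthBisecAt i₀ f fd fdd fddd r) (hf : 0 < f r) {j : Fin n}
    (hj : j ≠ i₀) : (fd r + r ^ 2 * fdd r) * f r ≤ (r * fd r) ^ 2 := by
  have := h.bisecCurv_single_nonneg hj.symm
  rw [Pi.single_eq_same, Pi.single_eq_of_ne hj.symm, bisecCurv_one_zero] at this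
  have key : fd r + r ^ 2 * fdd r ≤ r ^ 2 * fd r ^ 2 / f r := by linarith
  rw [le_div_iff₀ hf] at key
  linarith

end NonnegOrthBisecAt

theorem Convex.antitoneOn_of_hasDerivWithinAt_nonpos {D : Set ℝ} (hD : Convex ℝ D)
    {f f' : ℝ → ℝ} (hf : ∀ x ∈ D, HasDerivWithinAt f (f' x) D x) (hf' : ∀ x ∈ D, f' x ≤ 0) :
    AntitoneOn f D :=
  _root_.antitoneOn_of_hasDerivWithinAt_nonpos hD (fun x hx => (hf x hx).continuousWithinAt)
    (fun x hx => (hf x (interior_subset hx)).mono interior_subset)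
    (fun x hx => hf' x (interior_subset hx))

theorem Convex.eq_of_hasDerivWithinAt_zero {D : Set ℝ} (hD : Convex ℝ D) {f : ℝ → ℝ}
    (hf : ∀ x ∈ D, HasDerivWithinAt f 0 D x) {x y : ℝ} (hx : x ∈ D) (hy : y ∈ D) :
    f x = f y := by
  have hanti : AntitoneOn f D := hD.antitoneOn_of_hasDerivWithinAt_nonpos hf fun _ _ => le_rfl
  have hmono : AntitoneOn (-f) D :=
    hD.antitoneOn_of_hasDerivWithinAt_nonpos (fun x hx => by simpa using (hf x hx).neg)
      fun _ _ => le_rfl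
  rcases le_total x y with hxy | hxy
  · exact le_antisymm (neg_le_neg_iff.1 (hmono hx hy hxy)) (hanti hx hy hxy)
  · exact le_antisymm (hanti hy hx hxy) (neg_le_neg_iff.1 (hmono hy hx hxy))

theorem eq_top_of_setLIntegral_ofReal_eq_top {a : ℝ≥0∞} {g : ℝ → ℝ} {C : ℝ}
    (hg : ∀ r, 0 < r → ENNReal.ofReal r < a → g r ≤ C)
    (h : ∫⁻ r in {r : ℝ | 0 < r ∧ ENNReal.ofReal r < a}, ENNReal.ofReal (g r) = ⊤) : a = ⊤ := by
  by_contra ha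
  have hsub : {r : ℝ | 0 < r ∧ ENNReal.ofReal r < a} ⊆ Ioo 0 a.toReal :=
    fun r ⟨hr, hra⟩ => ⟨hr, (ENNReal.ofReal_lt_iff_lt_toReal hr.le ha).1 hra⟩
  have hvol : volume {r : ℝ | 0 < r ∧ ENNReal.ofReal r < a} ≠ ⊤ :=
    ((measure_mono hsub).trans_lt (by simp [Real.volume_Ioo])).ne
  exact (setLIntegral_lt_top_of_le_nnreal hvol
    ⟨C.toNNReal, fun r ⟨hr, hra⟩ => ENNReal.ofReal_le_ofReal (hg r hr hra)⟩).ne h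

theorem eq_top_of_lintegral_sqrt_eq_top {a : ℝ≥0∞} {f fd : ℝ → ℝ}
    (hf : ∀ r ∈ {r : ℝ | 0 ≤ r ∧ ENNReal.ofReal r < a},
      HasDerivWithinAt f (r * fd r) {r : ℝ | 0 ≤ r ∧ ENNReal.ofReal r < a} r)
    (hfd : ∀ r, 0 < r → ENNReal.ofReal r < a → fd r ≤ 0)
    (hcomplete : ∫⁻ r in {r : ℝ | 0 < r ∧ ENNReal.ofReal r < a},
      ENNReal.ofReal (Real.sqrt (f r + r ^ 2 * fd r)) = ⊤) : a = ⊤ := by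
  have hS : Convex ℝ {r : ℝ | 0 ≤ r ∧ ENNReal.ofReal r < a} :=
    (convex_Ici 0).inter ordConnected_Iio.preimage_ennreal_ofReal.convex
  have hanti : AntitoneOn f {r : ℝ | 0 ≤ r ∧ ENNReal.ofReal r < a} :=
    hS.antitoneOn_of_hasDerivWithinAt_nonpos hf fun r ⟨hr, hra⟩ => by
      rcases hr.eq_or_lt with rfl | hr
      · simp
      · exact mul_nonpos_of_nonneg_of_nonpos hr.le (hfd r hr hra)
  refine eq_top_of_setLIntegral_ofReal_eq_top (C := √(f 0)) (fun r hr hra => ?_) hcomplete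
  have hf0 : f r ≤ f 0 :=
    hanti ⟨le_rfl, (ENNReal.ofReal_le_ofReal hr.le).trans_lt hra⟩ ⟨hr.le, hra⟩ hr.le
  exact Real.sqrt_le_sqrt (by nlinarith [hfd r hr hra])

-- `r * fd r / f r` is the logarithmic derivative of `f`.
theorem Convex.antitoneOn_logDeriv_of_log_concave {D : Set ℝ} (hD : Convex ℝ D)
    {f fd fdd : ℝ → ℝ}
    (hf : ∀ r ∈ D, HasDerivWithinAt f (r * fd r) D r)
    (hfd : ∀ r ∈ D, HasDerivWithinAt fd (r * fdd r) D r) (hf₀ : ∀ r ∈ D, f r ≠ 0)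
    (hlog : ∀ r ∈ D, (fd r + r ^ 2 * fdd r) * f r ≤ (r * fd r) ^ 2) :
    AntitoneOn (fun r => r * fd r / f r) D := by
  refine hD.antitoneOn_of_hasDerivWithinAt_nonpos
    (f' := fun r => ((fd r + r ^ 2 * fdd r) * f r - (r * fd r) ^ 2) / f r ^ 2)
    (fun r hr => ?_) (fun r hr => div_nonpos_of_nonpos_of_nonneg
      (sub_nonpos.2 (hlog r hr)) (sq_nonneg _))
  refine (((hasDerivWithinAt_id r D).mul (hfd r hr)).div (hf r hr) (hf₀ r hr)).congr_deriv ?_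
  simp only [id, Pi.mul_apply]
  ring

theorem nonneg_of_antitoneOn_of_one_add_mul_pos {G : ℝ → ℝ} (hG : AntitoneOn G (Ioi 0))
    (hpos : ∀ R, 0 < R → 0 < 1 + R * G R) {r : ℝ} (hr : 0 < r) : 0 ≤ G r := by
  by_contra! hneg
  set R := max r (-(G r)⁻¹)
  have hrR : r ≤ R := le_max_left _ _
  have hR : 0 < R := hr.trans_le hrR
  have hGR : R * G R ≤ R * G r := mul_le_mul_of_nonneg_left (hG hr hR hrR) hR.le
  have hRG : R * G r ≤ -1 := calc
    R * G r ≤ -(G r)⁻¹ * G r := mul_le_mul_of_nonpos_right (le_max_right _ _) hneg.le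
    _ = -1 := by rw [neg_mul, inv_mul_cancel₀ hneg.ne]
  linarith [hpos R hR]

theorem fd_eq_zero_of_antitoneOn_logDeriv {f fd : ℝ → ℝ}
    (hG : AntitoneOn (fun r => r * fd r / f r) (Ioi 0)) (hf : ∀ r, 0 < r → 0 < f r)
    (hh : ∀ r, 0 < r → 0 < f r + r ^ 2 * fd r) (hfd : ∀ r, 0 < r → fd r ≤ 0) {r : ℝ}
    (hr : 0 < r) : fd r = 0 := by
  have hG_nonneg : 0 ≤ r * fd r / f r := by
    refine nonneg_of_antitoneOn_of_one_add_mul_pos hG (fun R hR => ?_) hr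
    have h_eq : 1 + R * (R * fd R / f R) = (f R + R ^ 2 * fd R) / f R := by
      field_simp [(hf R hR).ne']
    exact h_eq ▸ div_pos (hh R hR) (hf R hR)
  have : 0 ≤ r * fd r := by simpa using (le_div_iff₀ (hf r hr)).1 hG_nonneg
  exact le_antisymm (hfd r hr) (nonneg_of_mul_nonneg_right this hr)

/-- Here `fd = f'/r`, `fdd = fd'/r`, `fddd = fdd'/r`, so that `h = f + r²·fd`; completeness is
the divergence of `∫₀^a √h dr`, and the curvature is tested on Euclidean-unit vectors
`u, v ∈ ℂⁿ` that are orthogonal for the metric (`f λ + r² ḟ α_u ᾱ_v = 0`). -/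
theorem rot_nonneg_orth_bisec_flat (n : ℕ) (hn : 3 ≤ n) (a : ℝ≥0∞)
    (f fd fdd fddd : ℝ → ℝ)
    (hf : ∀ r ∈ {r : ℝ | 0 ≤ r ∧ ENNReal.ofReal r < a},
      HasDerivWithinAt f (r * fd r) {r : ℝ | 0 ≤ r ∧ ENNReal.ofReal r < a} r)
    (hfd : ∀ r ∈ {r : ℝ | 0 ≤ r ∧ ENNReal.ofReal r < a},
      HasDerivWithinAt fd (r * fdd r) {r : ℝ | 0 ≤ r ∧ ENNReal.ofReal r < a} r)
    (hfpos : ∀ r ∈ {r : ℝ | 0 ≤ r ∧ ENNReal.ofReal r < a}, 0 < f r)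
    (hhpos : ∀ r ∈ {r : ℝ | 0 ≤ r ∧ ENNReal.ofReal r < a}, 0 < f r + r ^ 2 * fd r)
    (hcomplete : ∫⁻ r in {r : ℝ | 0 < r ∧ ENNReal.ofReal r < a},
      ENNReal.ofReal (Real.sqrt (f r + r ^ 2 * fd r)) = ⊤)
    (hcurv : ∀ r : ℝ, 0 < r → ENNReal.ofReal r < a → ∀ u v : Fin n → ℂ,
      (∑ i, ‖u i‖ ^ 2) = 1 → (∑ i, ‖v i‖ ^ 2) = 1 →
      f r * (∑ i, u i * (starRingEnd ℂ) (v i))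
          + r ^ 2 * fd r * (u ⟨0, by omega⟩ * (starRingEnd ℂ) (v ⟨0, by omega⟩)) = 0 →
      0 ≤ bisecCurv f fd fdd fddd r (u ⟨0, by omega⟩) (v ⟨0, by omega⟩) (∑ i, u i * v i)
            (∑ i, u i * (starRingEnd ℂ) (v i))) :
    a = ⊤ ∧ ∀ r s : ℝ, 0 ≤ r → 0 ≤ s → f r = f s := by
  have hfd_nonpos : ∀ r, 0 < r → ENNReal.ofReal r < a → fd r ≤ 0 := fun r hr hra =>
    NonnegOrthBisecAt.fd_nonpos (i := ⟨1, by omega⟩) (j := ⟨2, by omega⟩) (hcurv r hr hra)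
      (by simp) (by simp) (by simp)
  obtain rfl : a = ⊤ := eq_top_of_lintegral_sqrt_eq_top hf hfd_nonpos hcomplete
  have hS : {r : ℝ | 0 ≤ r ∧ ENNReal.ofReal r < ⊤} = Ici 0 := by ext; simp
  rw [hS] at hf hfd hfpos hhpos
  have hpos : Ioi (0 : ℝ) ⊆ Ici 0 := Ioi_subset_Ici_self
  have hG : AntitoneOn (fun r => r * fd r / f r) (Ioi 0) :=
    (convex_Ioi 0).antitoneOn_logDeriv_of_log_concave
      (fun r hr => (hf r (hpos hr)).mono hpos) (fun r hr => (hfd r (hpos hr)).mono hpos)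
      (fun r hr => (hfpos r (hpos hr)).ne')
      (fun r hr => NonnegOrthBisecAt.log_concave (j := ⟨1, by omega⟩)
        (hcurv r hr ofReal_lt_top) (hfpos r (hpos hr)) (by simp))
  have hfd_zero : ∀ r, 0 < r → fd r = 0 := fun _ =>
    fd_eq_zero_of_antitoneOn_logDeriv hG (fun r hr => hfpos r (hpos hr))
      (fun r hr => hhpos r (hpos hr)) (fun r hr => hfd_nonpos r hr ofReal_lt_top)
  refine ⟨rfl, fun r s hr hs => (convex_Ici 0).eq_of_hasDerivWithinAt_zero (fun x hx => ?_) hr hs⟩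
  refine (hf x hx).congr_deriv ?_
  rcases eq_or_lt_of_le (mem_Ici.1 hx) with rfl | hx0
  · simp
  · simp [hfd_zero x hx0]
end
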